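/- At x = 1/1000, the matrices A := A_{1/1000} and B := B_{1/1000} are positive semidefinite 3×3 real matrices satisfying tr(A⁵ · B⁵) < p_{5,5}(A, B). In particular, there exist positive semidefinite 3×3 real matrices A, B such that the averaged word trace p_{5,5}(A, B) strictly exceeds the clustered trace tr(A⁵B⁵), refuting the left inequality of the refined BMV conjecture for (n, m) = (5, 5). -/

import Mathlib

open Matrix

/-- The matrix `A_x`. -/
def Amat (x : ℝ) : Matrix (Fin 3) (Fin 3) ℝ :=
  !![1, 0, 0; 0, x, -x; 0, -x, x]

/-- The matrix `B_x`. -/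
def Bmat (x : ℝ) : Matrix (Fin 3) (Fin 3) ℝ :=
  !![x, -x, 0; -x, x, 0; 0, 0, 1]

/-- The (finite) set `𝒲_{n,m}` of words with exactly `n` letters `A` (`true`)
and `m` letters `B` (`false`). -/
def words (n m : ℕ) : Finset (List Bool) :=
  (List.replicate n true ++ List.replicate m false).permutations.toFinset

/-- The averaged word trace `p_{5,5}(A, B)` for arbitrary 3×3 real matrices. -/
noncomputable def p55 (A B : Matrix (Fin 3) (Fin 3) ℝ) : ℝ :=
  (1 / 252) * ∑ w ∈ words 5 5, ((w.map fun b => if b = true then A else B).prod).trace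

/-!
`A_x = e₁e₁ᵀ + x (e₂ - e₃)(e₂ - e₃)ᵀ` is positive semidefinite for `x ≥ 0`, and `B_x` is `A_x`
with the coordinates listed in reverse order. The sum `S_{n,m}` of all words with `n` letters `A`
and `m` letters `B` satisfies `S_{n+1,m+1} = A S_{n,m+1} + B S_{n+1,m}` (split a word at its
first letter), so `p_{5,5}` is computed from the 36 matrices `S_{n,m}`, `n, m ≤ 5`, instead of
from 252 words. Exact arithmetic at `x = 1/1000` gives `tr(A⁵B⁵) = 3.2 · 10⁻¹⁴` against
`p_{5,5}(A, B) ≈ 5.098 · 10⁻¹⁴`.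
-/

theorem Amat_posSemidef {x : ℝ} (hx : 0 ≤ x) : (Amat x).PosSemidef := by
  refine .of_dotProduct_mulVec_nonneg ?_ fun v => ?_
  · ext i j
    fin_cases i <;> fin_cases j <;> simp [Amat]
  · have hv : star v ⬝ᵥ (Amat x *ᵥ v) = v 0 ^ 2 + x * (v 1 - v 2) ^ 2 := by
      simp only [Amat, dotProduct, mulVec, Fin.sum_univ_three, Pi.star_apply, star_trivial,
        of_apply, cons_val', cons_val_fin_one, cons_val_zero, cons_val_one, cons_val]
      ring
    rw [hv]
    positivity

theorem Bmat_eq_submatrix_rev (x : ℝ) : Bmat x = (Amat x).submatrix Fin.rev Fin.rev := by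
  ext i j
  fin_cases i <;> fin_cases j <;> rfl

theorem Bmat_posSemidef {x : ℝ} (hx : 0 ≤ x) : (Bmat x).PosSemidef := by
  rw [Bmat_eq_submatrix_rev]
  exact (Amat_posSemidef hx).submatrix _

theorem mem_words {n m : ℕ} {w : List Bool} :
    w ∈ words n m ↔ w.count true = n ∧ w.count false = m := by
  simp [words, List.perm_iff_count, Bool.forall_bool, List.count_replicate, and_comm]

theorem words_zero_zero : words 0 0 = {[]} := by
  ext w
  rcases w with _ | ⟨_ | _, w⟩ <;> simp [mem_words]

theorem words_succ_zero (n : ℕ) :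
    words (n + 1) 0 = (words n 0).map ⟨List.cons true, List.cons_injective⟩ := by
  ext w
  rcases w with _ | ⟨_ | _, w⟩ <;> simp [mem_words]

theorem words_zero_succ (m : ℕ) :
    words 0 (m + 1) = (words 0 m).map ⟨List.cons false, List.cons_injective⟩ := by
  ext w
  rcases w with _ | ⟨_ | _, w⟩ <;> simp [mem_words]

theorem words_succ_succ (n m : ℕ) :
    words (n + 1) (m + 1) =
      ((words n (m + 1)).map ⟨List.cons true, List.cons_injective⟩).disjUnion
        ((words (n + 1) m).map ⟨List.cons false, List.cons_injective⟩)
        (by simp [Finset.disjoint_left]) := by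
  ext w
  rcases w with _ | ⟨_ | _, w⟩ <;> simp [mem_words]

section wordSum

variable {R : Type*} [Semiring R]

def wordSum (a b : R) : ℕ → ℕ → R
  | 0, 0 => 1
  | n + 1, 0 => a * wordSum a b n 0
  | 0, m + 1 => b * wordSum a b 0 m
  | n + 1, m + 1 => a * wordSum a b n (m + 1) + b * wordSum a b (n + 1) m

theorem sum_words_prod_eq_wordSum (a b : R) :
    ∀ n m, ∑ w ∈ words n m, (w.map fun x => if x = true then a else b).prod = wordSum a b n m
  | 0, 0 => by simp [words_zero_zero, wordSum]
  | n + 1, 0 => by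
    simp [words_succ_zero, wordSum, ← Finset.mul_sum, sum_words_prod_eq_wordSum a b n 0]
  | 0, m + 1 => by
    simp [words_zero_succ, wordSum, ← Finset.mul_sum, sum_words_prod_eq_wordSum a b 0 m]
  | n + 1, m + 1 => by
    rw [words_succ_succ, Finset.sum_disjUnion, Finset.sum_map, Finset.sum_map]
    simp [wordSum, ← Finset.mul_sum, sum_words_prod_eq_wordSum a b n (m + 1),
      sum_words_prod_eq_wordSum a b (n + 1) m]

end wordSum

theorem p55_eq_trace_wordSum (A B : Matrix (Fin 3) (Fin 3) ℝ) :
    p55 A B = 1 / 252 * (wordSum A B 5 5).trace := by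
  rw [p55, ← sum_words_prod_eq_wordSum, Matrix.trace_sum]

theorem trace_Amat_pow_five_mul_Bmat_pow_five :
    (Amat (1 / 1000) ^ 5 * Bmat (1 / 1000) ^ 5).trace = 32000000000000256 / 10 ^ 30 := by
  norm_num [Amat, Bmat, pow_succ, Matrix.mul_fin_three, Matrix.trace_fin_three_of]

theorem trace_wordSum_Amat_Bmat_five_five :
    (wordSum (Amat (1 / 1000)) (Bmat (1 / 1000)) 5 5).trace = 12847356269761869762 / 10 ^ 30 := by
  norm_num [wordSum, Amat, Bmat, Matrix.mul_fin_three, Matrix.one_fin_three,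
    Matrix.trace_fin_three_of]

theorem stmt_15 :
    (Amat (1 / 1000)).PosSemidef ∧ (Bmat (1 / 1000)).PosSemidef ∧
      (Amat (1 / 1000) ^ 5 * Bmat (1 / 1000) ^ 5).trace <
        p55 (Amat (1 / 1000)) (Bmat (1 / 1000)) ∧
      ∃ A B : Matrix (Fin 3) (Fin 3) ℝ,
        A.PosSemidef ∧ B.PosSemidef ∧ (A ^ 5 * B ^ 5).trace < p55 A B := by
  have hA : (Amat (1 / 1000)).PosSemidef := Amat_posSemidef (by norm_num)
  have hB : (Bmat (1 / 1000)).PosSemidef := Bmat_posSemidef (by norm_num)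
  have hlt : (Amat (1 / 1000) ^ 5 * Bmat (1 / 1000) ^ 5).trace <
      p55 (Amat (1 / 1000)) (Bmat (1 / 1000)) := by
    rw [p55_eq_trace_wordSum, trace_wordSum_Amat_Bmat_five_five,
      trace_Amat_pow_five_mul_Bmat_pow_five]
    norm_num
  exact ⟨hA, hB, hlt, _, _, hA, hB, hlt⟩
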